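/- arXiv:2202.02747 — 4 statements merged into one kernel-verified Lean document; each statement's English description precedes it below -/
import Mathlib

section
/- Let E ⊆ ℝ≥0 be a bounded closed set. Then λ(E) = Σ_{k=1}^{K_E} μ(Ẽ_k), where for each positive integer k, Ẽ_k = {x ∈ [0,1) : #{n ∈ ℕ : n + x ∈ E} ≥ k} and K_E = sup{k ∈ ℕ : Ẽ_k ≠ ∅}. -/
/-!
Cutting `E` into the pieces `E ∩ [n, n + 1)` and translating each back to `[0, 1)` gives
`λ(E) = ∫_{[0,1)} #{n : n + x ∈ E} dx`. The counting function is `ℕ`-valued and bounded by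
`K_E` on `[0, 1)`, so the layer-cake formula writes its integral as
`Σ_{k=1}^{K_E} μ{x : count ≥ k}`, and `{x ∈ [0, 1) : count ≥ k}` is exactly `Ẽ_k`.
-/

open MeasureTheory Set Pointwise

/-- `Ẽ_k = {x ∈ [0,1) : #{n ∈ ℕ : n + x ∈ E} ≥ k}`. -/
def tildeSet (E : Set ℝ) (k : ℕ) : Set ℝ :=
  {x ∈ Set.Ico (0 : ℝ) 1 | k ≤ {n : ℕ | (n : ℝ) + x ∈ E}.ncard}

/-- `K_E = sup {k ∈ ℕ : Ẽ_k ≠ ∅}`. -/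
noncomputable def KE (E : Set ℝ) : ℕ := sSup {k : ℕ | tildeSet E k ≠ ∅}

open scoped ENNReal

section Multiplicity

variable {α ι : Type*}

theorem tsum_indicator_one_eq_encard (A : ι → Set α) (x : α) :
    ∑' i, (A i).indicator (1 : α → ℝ≥0∞) x = ({i | x ∈ A i}.encard : ℝ≥0∞) := by
  rw [← ENNReal.tsum_set_one, tsum_subtype {i | x ∈ A i} fun _ => 1]
  rfl

variable [MeasurableSpace α] {μ : Measure α}

theorem measurable_encard_setOf_mem [Countable ι] {A : ι → Set α}
    (hA : ∀ i, MeasurableSet (A i)) :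
    Measurable fun x => ({i | x ∈ A i}.encard : ℝ≥0∞) := by
  simp_rw [← tsum_indicator_one_eq_encard]
  exact Measurable.tsum fun i => measurable_one.indicator (hA i)

theorem tsum_measure_eq_lintegral_encard [Countable ι] {A : ι → Set α}
    (hA : ∀ i, MeasurableSet (A i)) :
    ∑' i, μ (A i) = ∫⁻ x, ({i | x ∈ A i}.encard : ℝ≥0∞) ∂μ := by
  simp_rw [← tsum_indicator_one_eq_encard, ← lintegral_indicator_one (hA _)]
  exact (lintegral_tsum fun i => (measurable_one.indicator (hA i)).aemeasurable).symm

theorem natCast_eq_sum_Icc_ite_le {R : Type*} [AddCommMonoidWithOne R] {m K : ℕ} (hm : m ≤ K) :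
    (m : R) = ∑ k ∈ Finset.Icc 1 K, if k ≤ m then 1 else 0 := by
  rw [Finset.sum_boole, show (Finset.Icc 1 K).filter (· ≤ m) = Finset.Icc 1 m by
    ext k; simp only [Finset.mem_filter, Finset.mem_Icc]; omega]
  simp

theorem lintegral_natCast_eq_sum_measure_le {f : α → ℕ}
    (hf : Measurable fun x => (f x : ℝ≥0∞)) {K : ℕ} (hK : ∀ᵐ x ∂μ, f x ≤ K) :
    ∫⁻ x, (f x : ℝ≥0∞) ∂μ = ∑ k ∈ Finset.Icc 1 K, μ {x | k ≤ f x} := by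
  have hmeas (k : ℕ) : MeasurableSet {x | k ≤ f x} := by
    simpa only [preimage, mem_Ici, Nat.cast_le] using hf (measurableSet_Ici (a := (k : ℝ≥0∞)))
  calc ∫⁻ x, (f x : ℝ≥0∞) ∂μ
      = ∫⁻ x, ∑ k ∈ Finset.Icc 1 K, {x | k ≤ f x}.indicator 1 x ∂μ := by
        refine lintegral_congr_ae (hK.mono fun x hx => ?_)
        simp only [indicator_apply, mem_ofPred_eq, Pi.one_apply]
        exact natCast_eq_sum_Icc_ite_le hx
    _ = ∑ k ∈ Finset.Icc 1 K, μ {x | k ≤ f x} := by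
        rw [lintegral_finsetSum _ fun k _ => measurable_one.indicator (hmeas k)]
        simp_rw [lintegral_indicator_one (hmeas _)]

end Multiplicity

section IntegerTranslates

variable {E : Set ℝ}

theorem volume_eq_lintegral_encard (hE : E ⊆ Ici 0) (hm : MeasurableSet E) :
    volume E = ∫⁻ x in Ico 0 1, ({n : ℕ | (n : ℝ) + x ∈ E}.encard : ℝ≥0∞) := by
  have hcover : E = ⋃ n : ℕ, E ∩ Ico (n : ℝ) (n + 1) := by
    ext x
    refine ⟨fun hx => mem_iUnion.2
      ⟨⌊x⌋₊, hx, Nat.floor_le (hE hx), Nat.lt_floor_add_one x⟩,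
      fun hx => (mem_iUnion.1 hx).elim fun _ h => h.1⟩
  have hdisj : Pairwise (Function.onFun Disjoint fun n : ℕ => E ∩ Ico (n : ℝ) (n + 1)) := by
    intro i j hij
    exact ((pairwise_disjoint_Ico_intCast (α := ℝ)) (Nat.cast_injective.ne hij)).mono
      inter_subset_right (by simp)
  have htranslate (n : ℕ) :
      volume (E ∩ Ico (n : ℝ) (n + 1)) =
        volume.restrict (Ico 0 1) ((fun x => (n : ℝ) + x) ⁻¹' E) := by
    rw [Measure.restrict_apply' measurableSet_Ico, ← measure_preimage_add _ (n : ℝ),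
      preimage_inter, preimage_const_add_Ico]
    simp
  calc volume E = ∑' n : ℕ, volume (E ∩ Ico (n : ℝ) (n + 1)) := by
        conv_lhs => rw [hcover]
        exact measure_iUnion hdisj fun n => hm.inter measurableSet_Ico
    _ = _ := by
        rw [tsum_congr htranslate]
        exact tsum_measure_eq_lintegral_encard fun n : ℕ => hm.preimage (measurable_const_add _)

theorem setOf_natCast_add_mem_subset_Iic {b : ℝ} (hb : b ∈ upperBounds E) (x : ℝ) :
    {n : ℕ | (n : ℝ) + x ∈ E} ⊆ Iic ⌊b - x⌋₊ := fun n hn =>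
  Nat.le_floor (by linarith [hb hn])

theorem finite_setOf_natCast_add_mem (hE : BddAbove E) (x : ℝ) :
    {n : ℕ | (n : ℝ) + x ∈ E}.Finite :=
  let ⟨_, hb⟩ := hE
  (finite_Iic _).subset (setOf_natCast_add_mem_subset_Iic hb x)

theorem encard_setOf_natCast_add_mem_eq_ncard (hE : BddAbove E) :
    (fun x => ({n : ℕ | (n : ℝ) + x ∈ E}.encard : ℝ≥0∞)) =
      fun x => ({n : ℕ | (n : ℝ) + x ∈ E}.ncard : ℝ≥0∞) :=
  funext fun x => by rw [← (finite_setOf_natCast_add_mem hE x).cast_ncard_eq]; rfl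

theorem ncard_setOf_natCast_add_mem_le_KE (hE : BddAbove E) {x : ℝ} (hx : x ∈ Ico 0 1) :
    {n : ℕ | (n : ℝ) + x ∈ E}.ncard ≤ KE E := by
  obtain ⟨b, hb⟩ := hE
  have hbound {y : ℝ} (hy : y ∈ Ico 0 1) :
      {n : ℕ | (n : ℝ) + y ∈ E}.ncard ≤ ⌊b⌋₊ + 1 := by
    have hsub : {n : ℕ | (n : ℝ) + y ∈ E} ⊆ Iic ⌊b⌋₊ :=
      (setOf_natCast_add_mem_subset_Iic hb y).trans
        (Iic_subset_Iic.2 (Nat.floor_mono (by linarith [hy.1])))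
    simpa using ncard_le_ncard hsub (finite_Iic _)
  refine le_csSup ⟨⌊b⌋₊ + 1, fun k hk => ?_⟩ (nonempty_iff_ne_empty.1 ⟨x, hx, le_rfl⟩)
  obtain ⟨y, hy, hky⟩ := nonempty_iff_ne_empty.2 hk
  exact hky.trans (hbound hy)

end IntegerTranslates

/-- For a bounded closed set `E ⊆ ℝ≥0`, `λ(E) = Σ_{k=1}^{K_E} μ(Ẽ_k)`. -/
theorem measure_eq_sum_tilde (E : Set ℝ) (hE : E ⊆ {x : ℝ | 0 ≤ x})
    (hEbd : Bornology.IsBounded E) (hEcl : IsClosed E) :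
    volume E = ∑ k ∈ Finset.Icc 1 (KE E), volume (tildeSet E k) := by
  have hm := hEcl.measurableSet
  have hcount := encard_setOf_natCast_add_mem_eq_ncard hEbd.bddAbove
  have hmeas : Measurable fun x => ({n : ℕ | (n : ℝ) + x ∈ E}.ncard : ℝ≥0∞) :=
    hcount ▸ measurable_encard_setOf_mem fun n : ℕ =>
      hm.preimage (measurable_const_add (n : ℝ))
  rw [volume_eq_lintegral_encard hE hm, hcount, lintegral_natCast_eq_sum_measure_le hmeas
    (ae_restrict_of_forall_mem measurableSet_Ico fun x hx =>
      ncard_setOf_natCast_add_mem_le_KE hEbd.bddAbove hx)]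
  refine Finset.sum_congr rfl fun k _ => ?_
  rw [Measure.restrict_apply' measurableSet_Ico, inter_comm]
  rfl
end

section
/- Let A, B ⊆ ℝ be closed bounded sets of nonzero Lebesgue measure with A ⊆ ℝ≥0, 0 = min B and 1 = sup B, let b = λ(B), let K be a positive integer and 0 ≤ δ < 1 with λ(A)/b = K(K−1)/2 + Kδ, suppose λ(A+B) = λ(A) + (K+δ+ε)b with ε > 0, and suppose K_A = K, where K_A is defined from the sets Ã_k. Set S = A+B and define, for each k, S̃_k = {x ∈ [0,1) : #{n ∈ ℕ : n + x ∈ S} ≥ k}. Then ε·b = Σ_{k=K+2}^{K_S} μ(S̃_k) + Σ_{k=2}^{K+1} ((k−1)/K)·(μ(S̃_k) − μ(Ã_{k−1})) + Σ_{k=1}^{K} ((K+1−k)/K)·(μ(S̃_k) − μ(Ã_k) − b). -/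
open MeasureTheory Set Pointwise
open scoped ENNReal

/-! Cutting a measurable `E ⊆ [0, N)` into the unit slices `E ∩ [n, n + 1)` and translating them
to `[0, 1)` gives `λ(E) = ∫_{[0,1)} #{n : n + x ∈ E} dx = Σ_{k ≥ 1} μ(Ẽ_k)` (a discrete layer-cake
formula). For `A`, whose levels above `K` are empty, and for `S = A + B`, the claimed right-hand
side rearranges to `λ(S) - (K + 1)/K · λ(A) - (K + 1) b / 2`, since the weights `(k - 1)/K` and
`(K + 1 - k)/K` add up to `1`; the hypotheses on `λ(A)` and `λ(S)` turn this into `ε b`. -/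

section LayerCake

open Classical in
theorem sum_measure_eq_sum_measure_le_card_filter {α ι : Type*} [MeasurableSpace α]
    (μ : Measure α) (s : Finset ι) {A : ι → Set α} (hA : ∀ i ∈ s, MeasurableSet (A i)) :
    ∑ i ∈ s, μ (A i) = ∑ k ∈ Finset.Icc 1 s.card, μ {x | k ≤ (s.filter (x ∈ A ·)).card} := by
  set c : α → ℕ := fun x => (s.filter (x ∈ A ·)).card
  have hc : Measurable c := by
    have : c = fun x => ∑ i ∈ s, (A i).indicator 1 x := by
      ext x; simp [c, Set.indicator_apply]
    rw [this]
    exact Finset.measurable_sum _ fun i hi => measurable_one.indicator (hA i hi)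
  have hlevel : ∀ k, MeasurableSet {x | k ≤ c x} := fun k => hc .of_discrete
  have hcount : ∀ x, ∑ i ∈ s, (A i).indicator (1 : α → ℝ≥0∞) x = c x := by
    intro x; simp [c, Set.indicator_apply]
  have hlayer : ∀ x,
      ∑ k ∈ Finset.Icc 1 s.card, {x | k ≤ c x}.indicator (1 : α → ℝ≥0∞) x = c x := by
    intro x
    have : (Finset.Icc 1 s.card).filter (· ≤ c x) = Finset.Icc 1 (c x) := by
      ext k
      simp only [Finset.mem_filter, Finset.mem_Icc]
      have : c x ≤ s.card := Finset.card_filter_le _ _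
      omega
    simp [Set.indicator_apply, this]
  calc ∑ i ∈ s, μ (A i) = ∫⁻ x, ∑ i ∈ s, (A i).indicator 1 x ∂μ := by
        rw [lintegral_finsetSum _ fun i hi => measurable_one.indicator (hA i hi)]
        exact Finset.sum_congr rfl fun i hi => (lintegral_indicator_one (hA i hi)).symm
    _ = ∫⁻ x, ∑ k ∈ Finset.Icc 1 s.card, {x | k ≤ c x}.indicator 1 x ∂μ := by
        simp_rw [hcount, hlayer]
    _ = _ := by
        rw [lintegral_finsetSum _ fun k _ => measurable_one.indicator (hlevel k)]
        exact Finset.sum_congr rfl fun k _ => lintegral_indicator_one (hlevel k)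

end LayerCake

section UnitSlices

def unitSlice (E : Set ℝ) (n : ℕ) : Set ℝ := Ico 0 1 ∩ ((n : ℝ) + ·) ⁻¹' E

theorem measurableSet_unitSlice {E : Set ℝ} (hE : MeasurableSet E) (n : ℕ) :
    MeasurableSet (unitSlice E n) :=
  measurableSet_Ico.inter (measurable_const_add _ hE)

theorem volume_unitSlice (E : Set ℝ) (n : ℕ) :
    volume (unitSlice E n) = volume (E ∩ Ico (n : ℝ) (n + 1)) := by
  have : unitSlice E n = ((n : ℝ) + ·) ⁻¹' (E ∩ Ico (n : ℝ) (n + 1)) := by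
    ext x
    simp only [unitSlice, mem_inter_iff, mem_preimage, mem_Ico, le_add_iff_nonneg_right,
      add_lt_add_iff_left]
    tauto
  rw [this, measure_preimage_add]

theorem volume_eq_sum_volume_unitSlice {E : Set ℝ} (hE : MeasurableSet E) {N : ℕ}
    (hEN : E ⊆ Ico 0 N) : volume E = ∑ n ∈ Finset.range N, volume (unitSlice E n) := by
  have hcover : E = ⋃ n ∈ Finset.range N, E ∩ Ico (n : ℝ) (n + 1) := by
    refine Subset.antisymm (fun x hx => ?_) (iUnion₂_subset fun _ _ => inter_subset_left)
    have hx0 := (hEN hx).1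
    refine mem_biUnion (x := ⌊x⌋₊) ?_ ⟨hx, Nat.floor_le hx0, Nat.lt_floor_add_one x⟩
    exact Finset.mem_range.2 ((Nat.floor_lt hx0).2 (hEN hx).2)
  have hdisj : PairwiseDisjoint (↑(Finset.range N) : Set ℕ)
      fun n : ℕ => E ∩ Ico (n : ℝ) (n + 1) := fun m _ n _ hmn =>
    ((pairwise_disjoint_Ico_intCast ℝ (Nat.cast_injective.ne hmn : (m : ℤ) ≠ n)).mono
      (by simp) (by simp))
  rw [hcover, measure_biUnion_finset hdisj fun n _ => hE.inter measurableSet_Ico]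
  exact Finset.sum_congr rfl fun n _ => by simp_rw [volume_unitSlice, ← hcover]

variable {E : Set ℝ} {N : ℕ}

open Classical in
theorem tildeSet_eq_setOf_le_card (hEN : E ⊆ Ico 0 N) {k : ℕ} (hk : 1 ≤ k) :
    tildeSet E k = {x | k ≤ ((Finset.range N).filter (x ∈ unitSlice E ·)).card} := by
  ext x
  by_cases hx : x ∈ Ico (0 : ℝ) 1
  · have : {n : ℕ | (n : ℝ) + x ∈ E} = ↑((Finset.range N).filter (x ∈ unitSlice E ·)) := by
      ext n
      simp only [mem_ofPred_eq, Finset.coe_filter, Finset.mem_range, unitSlice, mem_inter_iff,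
        mem_preimage, hx, true_and]
      refine ⟨fun h => ⟨?_, h⟩, And.right⟩
      have := (hEN h).2
      exact_mod_cast (show (n : ℝ) < N by linarith [hx.1])
    simp only [tildeSet, hx, true_and, this, ncard_coe_finset, mem_ofPred_eq]
  · have : (Finset.range N).filter (x ∈ unitSlice E ·) = ∅ :=
      Finset.filter_false_of_mem fun n _ h => hx h.1
    simp only [tildeSet, hx, false_and, this, Finset.card_empty, mem_ofPred_eq, false_iff,
      not_le]
    exact hk

theorem volume_eq_sum_volume_tildeSet (hE : MeasurableSet E) (hEN : E ⊆ Ico 0 N) :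
    volume E = ∑ k ∈ Finset.Icc 1 N, volume (tildeSet E k) := by
  rw [volume_eq_sum_volume_unitSlice hE hEN,
    sum_measure_eq_sum_measure_le_card_filter _ _ fun n _ => measurableSet_unitSlice hE n,
    Finset.card_range]
  refine Finset.sum_congr rfl fun k hk => ?_
  rw [tildeSet_eq_setOf_le_card hEN (Finset.mem_Icc.1 hk).1]

theorem tildeSet_eq_empty_of_lt (hEN : E ⊆ Ico 0 N) {k : ℕ} (hk : N < k) :
    tildeSet E k = ∅ := by
  classical
  rw [tildeSet_eq_setOf_le_card hEN (by omega)]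
  refine eq_empty_of_forall_notMem fun x hx => hk.not_ge ?_
  exact (show k ≤ _ from hx).trans ((Finset.card_filter_le _ _).trans_eq (Finset.card_range N))

theorem mem_upperBounds_setOf_tildeSet_ne_empty (hEN : E ⊆ Ico 0 N) :
    N ∈ upperBounds {k | tildeSet E k ≠ ∅} :=
  fun _ hk => not_lt.1 fun h => hk (tildeSet_eq_empty_of_lt hEN h)

theorem tildeSet_eq_empty_of_KE_lt (hEN : E ⊆ Ico 0 N) {k : ℕ} (hk : KE E < k) :
    tildeSet E k = ∅ := by
  by_contra h
  exact hk.not_ge (le_csSup ⟨N, mem_upperBounds_setOf_tildeSet_ne_empty hEN⟩ h)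

theorem KE_le (hEN : E ⊆ Ico 0 N) : KE E ≤ N :=
  csSup_le' (mem_upperBounds_setOf_tildeSet_ne_empty hEN)

theorem toReal_volume_eq_sum_tildeSet (hE : MeasurableSet E) (hEN : E ⊆ Ico 0 N) :
    (volume E).toReal = ∑ k ∈ Finset.Icc 1 N, (volume (tildeSet E k)).toReal := by
  rw [volume_eq_sum_volume_tildeSet hE hEN, ENNReal.toReal_sum fun k _ => ?_]
  exact ((measure_mono (sep_subset _ _)).trans_lt (by simp)).ne

theorem sum_toReal_volume_tildeSet_of_KE_le (hEN : E ⊆ Ico 0 N) (m : ℕ) {M : ℕ}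
    (hM : KE E ≤ M) (hMN : M ≤ N) :
    ∑ k ∈ Finset.Icc m M, (volume (tildeSet E k)).toReal
      = ∑ k ∈ Finset.Icc m N, (volume (tildeSet E k)).toReal := by
  refine Finset.sum_subset (Finset.Icc_subset_Icc_right hMN) fun k hk hk' => ?_
  rw [tildeSet_eq_empty_of_KE_lt hEN (by simp only [Finset.mem_Icc] at hk hk'; omega)]
  simp

end UnitSlices

theorem exists_subset_Ico_natCast {E : Set ℝ} (hE : Bornology.IsBounded E)
    (hE0 : E ⊆ Ici 0) (m : ℕ) : ∃ N : ℕ, m ≤ N ∧ E ⊆ Ico 0 N := by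
  obtain ⟨M, hM⟩ := hE.bddAbove
  refine ⟨max m (⌈M⌉₊ + 1), le_max_left _ _, fun x hx => ⟨hE0 hx, ?_⟩⟩
  calc x ≤ ⌈M⌉₊ := (hM hx).trans (Nat.le_ceil M)
    _ < ⌈M⌉₊ + 1 := lt_add_one _
    _ ≤ _ := by exact_mod_cast le_max_right m (⌈M⌉₊ + 1)

section WeightedSums

open Finset

theorem sum_Icc_one_natCast (K : ℕ) : ∑ k ∈ Icc 1 K, (k : ℝ) = K * (K + 1) / 2 := by
  induction K with
  | zero => simp
  | succ K ih =>
    rw [sum_Icc_succ_top (by omega), ih]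
    push_cast
    ring

theorem sum_Icc_one_add_sum_Icc_succ {M : Type*} [AddCommMonoid M] (f : ℕ → M) {m n : ℕ}
    (hmn : m ≤ n) :
    ∑ k ∈ Icc 1 m, f k + ∑ k ∈ Icc (m + 1) n, f k = ∑ k ∈ Icc 1 n, f k := by
  have hIcc : ∀ j, Finset.Icc 1 j = Finset.Ioc 0 j := Icc_add_one_left_eq_Ioc 0
  rw [hIcc, hIcc, Finset.Icc_add_one_left_eq_Ioc]
  exact sum_Ioc_consecutive f (Nat.zero_le m) hmn

theorem sum_Icc_two_eq_sum_Icc_one {M : Type*} [AddCommMonoid M] (f : ℕ → M) (K : ℕ) :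
    ∑ k ∈ Icc 2 (K + 1), f k = ∑ k ∈ Icc 1 K, f (k + 1) := by
  change ∑ k ∈ Icc (1 + 1) (K + 1), f k = _
  rw [← map_add_right_Icc, sum_map]
  rfl

theorem weighted_level_sum_eq (s a : ℕ → ℝ) (b : ℝ) {K N : ℕ} (hK : K ≠ 0)
    (hKN : K + 1 ≤ N) :
    (∑ k ∈ Icc (K + 2) N, s k)
      + (∑ k ∈ Icc 2 (K + 1), ((k : ℝ) - 1) / K * (s k - a (k - 1)))
      + (∑ k ∈ Icc 1 K, ((K : ℝ) + 1 - k) / K * (s k - a k - b))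
    = (∑ k ∈ Icc 1 N, s k) - (K + 1) / K * (∑ k ∈ Icc 1 K, a k) - (K + 1) / 2 * b := by
  have hK' : (K : ℝ) ≠ 0 := Nat.cast_ne_zero.2 hK
  have hs : (∑ k ∈ Icc 2 (K + 1), ((k : ℝ) - 1) / K * s k)
      + (∑ k ∈ Icc 1 K, ((K : ℝ) + 1 - k) / K * s k) = ∑ k ∈ Icc 1 (K + 1), s k := by
    have hbot : ∑ k ∈ Icc 2 (K + 1), ((k : ℝ) - 1) / K * s k
        = ∑ k ∈ Icc 1 (K + 1), ((k : ℝ) - 1) / K * s k := by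
      refine sum_subset (Icc_subset_Icc_left one_le_two) fun k hk hk' => ?_
      obtain rfl : k = 1 := by simp only [Finset.mem_Icc] at hk hk'; omega
      simp
    have htop : ∑ k ∈ Icc 1 K, ((K : ℝ) + 1 - k) / K * s k
        = ∑ k ∈ Icc 1 (K + 1), ((K : ℝ) + 1 - k) / K * s k := by
      rw [sum_Icc_succ_top (by omega)]
      simp
    rw [hbot, htop, ← sum_add_distrib]
    refine sum_congr rfl fun k _ => ?_
    field_simp
    ring
  have ha : (∑ k ∈ Icc 2 (K + 1), ((k : ℝ) - 1) / K * a (k - 1))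
      + (∑ k ∈ Icc 1 K, ((K : ℝ) + 1 - k) / K * a k) = (K + 1) / K * ∑ k ∈ Icc 1 K, a k := by
    rw [sum_Icc_two_eq_sum_Icc_one, ← sum_add_distrib, mul_sum]
    refine sum_congr rfl fun k _ => ?_
    push_cast
    field_simp
    ring
  have hb : ∑ k ∈ Icc 1 K, ((K : ℝ) + 1 - k) / K * b = (K + 1) / 2 * b := by
    rw [← sum_mul, ← sum_div, sum_sub_distrib, sum_Icc_one_natCast, sum_const, Nat.card_Icc]
    simp only [add_tsub_cancel_right, nsmul_eq_mul]
    field_simp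
    ring
  have := sum_Icc_one_add_sum_Icc_succ s hKN
  simp only [mul_sub, sum_sub_distrib]
  linarith

end WeightedSums

theorem eps_eq_sum_general (A B : Set ℝ)
    (hAcl : IsClosed A) (hBcl : IsClosed B)
    (hAbd : Bornology.IsBounded A) (hBbd : Bornology.IsBounded B)
    (hB0 : volume B ≠ 0)
    (hApos : A ⊆ {x : ℝ | 0 ≤ x})
    (hBmin : IsLeast B 0)
    (b : ℝ) (hb : (volume B).toReal = b)
    (K : ℕ) (hK : 1 ≤ K) (δ : ℝ)
    (hKδ : (volume A).toReal / b = (K : ℝ) * ((K : ℝ) - 1) / 2 + (K : ℝ) * δ)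
    (ε : ℝ)
    (heq : (volume (A + B)).toReal
      = (volume A).toReal + ((K : ℝ) + δ + ε) * b)
    (hKA : KE A = K) :
    ε * b
      = (∑ k ∈ Finset.Icc (K + 2) (KE (A + B)),
          (volume (tildeSet (A + B) k)).toReal)
        + (∑ k ∈ Finset.Icc 2 (K + 1), ((k : ℝ) - 1) / (K : ℝ)
            * ((volume (tildeSet (A + B) k)).toReal
              - (volume (tildeSet A (k - 1))).toReal))
        + (∑ k ∈ Finset.Icc 1 K, ((K : ℝ) + 1 - (k : ℝ)) / (K : ℝ)
            * ((volume (tildeSet (A + B) k)).toReal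
              - (volume (tildeSet A k)).toReal - b)) := by
  have hSc : IsCompact (A + B) := (Metric.isCompact_of_isClosed_isBounded hAcl hAbd).add
    (Metric.isCompact_of_isClosed_isBounded hBcl hBbd)
  have hS0 : A + B ⊆ Ici 0 := by
    rintro _ ⟨a, ha, y, hy, rfl⟩
    exact add_nonneg (hApos ha) (hBmin.2 hy)
  obtain ⟨N, hKN, hSN⟩ := exists_subset_Ico_natCast hSc.isBounded hS0 (K + 1)
  have hAN : A ⊆ Ico 0 N := (subset_add_left A hBmin.1).trans hSN
  have hA : (volume A).toReal = ∑ k ∈ Finset.Icc 1 K, (volume (tildeSet A k)).toReal := by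
    rw [sum_toReal_volume_tildeSet_of_KE_le hAN 1 hKA.le (by omega),
      toReal_volume_eq_sum_tildeSet hAcl.measurableSet hAN]
  have hb0 : b ≠ 0 := hb ▸ ENNReal.toReal_ne_zero.2 ⟨hB0, hBbd.measure_lt_top.ne⟩
  have hAval := (div_eq_iff hb0).1 hKδ
  rw [sum_toReal_volume_tildeSet_of_KE_le hSN _ le_rfl (KE_le hSN),
    weighted_level_sum_eq (fun k => (volume (tildeSet (A + B) k)).toReal)
      (fun k => (volume (tildeSet A k)).toReal) b (by omega) hKN,
    ← toReal_volume_eq_sum_tildeSet hSc.isClosed.measurableSet hSN, ← hA, heq]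
  field_simp
  linear_combination 2 * hAval

/-- The decomposition of the error `ε` along the levels of `S = A+B`:
`εb = Σ_{k=K+2}^{K_S} μ(S̃_k) + Σ_{k=2}^{K+1} ((k-1)/K)(μ(S̃_k) - μ(Ã_{k-1}))
  + Σ_{k=1}^{K} ((K+1-k)/K)(μ(S̃_k) - μ(Ã_k) - b)`. -/
theorem eps_eq_sum (A B : Set ℝ)
    (hAcl : IsClosed A) (hBcl : IsClosed B)
    (hAbd : Bornology.IsBounded A) (hBbd : Bornology.IsBounded B)
    (hA0 : volume A ≠ 0) (hB0 : volume B ≠ 0)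
    (hApos : A ⊆ {x : ℝ | 0 ≤ x})
    (hBmin : IsLeast B 0) (hBsup : sSup B = 1)
    (b : ℝ) (hb : (volume B).toReal = b)
    (K : ℕ) (hK : 1 ≤ K) (δ : ℝ) (hδ0 : 0 ≤ δ) (hδ1 : δ < 1)
    (hKδ : (volume A).toReal / b = (K : ℝ) * ((K : ℝ) - 1) / 2 + (K : ℝ) * δ)
    (ε : ℝ) (hε0 : 0 < ε)
    (heq : (volume (A + B)).toReal
      = (volume A).toReal + ((K : ℝ) + δ + ε) * b)
    (hKA : KE A = K) :
    ε * b
      = (∑ k ∈ Finset.Icc (K + 2) (KE (A + B)),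
          (volume (tildeSet (A + B) k)).toReal)
        + (∑ k ∈ Finset.Icc 2 (K + 1), ((k : ℝ) - 1) / (K : ℝ)
            * ((volume (tildeSet (A + B) k)).toReal
              - (volume (tildeSet A (k - 1))).toReal))
        + (∑ k ∈ Finset.Icc 1 K, ((K : ℝ) + 1 - (k : ℝ)) / (K : ℝ)
            * ((volume (tildeSet (A + B) k)).toReal
              - (volume (tildeSet A k)).toReal - b)) :=
  eps_eq_sum_general A B hAcl hBcl hAbd hBbd hB0 hApos hBmin b hb K hK δ hKδ ε heq hKA
end

section
/- For every bounded Lebesgue-measurable set E ⊆ ℝ, λ(E + {0,1}) ≥ λ(E) + μ(π(E)), where π : ℝ → 𝕋 = ℝ/ℤ is the canonical projection and E + {0,1} = E ∪ (E+1). -/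
open MeasureTheory Set Pointwise

/-!
Every point of `π(E)` lifts to some `e ∈ E` with `e + 1 ∉ E`: follow the fibre of `π` through a
point of `E` up to its last element in `E`, which exists because `E` is bounded. Hence
`π(E) ⊆ π((E + 1) \ E)`, and as `π` does not increase measure,
`λ(E ∪ (E + 1)) = λ(E) + λ((E + 1) \ E) ≥ λ(E) + μ(π(E))`.
-/

namespace AddCircle

variable {T : ℝ}

theorem measurableSet_image_coe {S : Set ℝ} (hS : MeasurableSet S) :
    MeasurableSet (((↑) : ℝ → AddCircle T) '' S) := by
  change MeasurableSet ((QuotientAddGroup.mk : ℝ → AddCircle T) ⁻¹' _)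
  rw [QuotientAddGroup.preimage_image_mk]
  exact .iUnion fun _ => measurable_add_const _ hS

theorem image_coe_subset_image_add_period_diff (hT : 0 < T) {E : Set ℝ} (hE : BddAbove E) :
    ((↑) : ℝ → AddCircle T) '' E ⊆ (↑) '' ((E + {T}) \ E) := by
  rintro _ ⟨e, he, rfl⟩
  obtain ⟨C, hC⟩ := hE
  have hbdd : ∀ n : ℤ, e + n • T ∈ E → n ≤ ⌈(C - e) / T⌉ := fun n hn => by
    have : (n : ℝ) ≤ (C - e) / T := by
      rw [le_div_iff₀ hT]
      linarith [hC hn, zsmul_eq_mul T n]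
    exact_mod_cast this.trans (Int.le_ceil _)
  obtain ⟨m, hm, hmax⟩ := Int.exists_greatest_of_bdd ⟨_, hbdd⟩ ⟨0, by simpa using he⟩
  have hnext : e + m • T + T ∉ E := fun h =>
    m.lt_succ.not_ge (hmax (m + 1) (by rwa [add_zsmul, one_zsmul, ← add_assoc]))
  refine ⟨e + m • T + T, ⟨add_mem_add hm rfl, hnext⟩, ?_⟩
  simp

variable [hT : Fact (0 < T)]

theorem volume_image_coe_le_of_measurableSet {S : Set ℝ} (hS : MeasurableSet S) :
    volume (((↑) : ℝ → AddCircle T) '' S) ≤ volume S := by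
  set I := Ioc 0 (0 + T)
  calc volume (((↑) : ℝ → AddCircle T) '' S)
      = volume (QuotientAddGroup.mk ⁻¹' (((↑) : ℝ → AddCircle T) '' S) ∩ I) :=
        add_projection_respects_measure T 0 (measurableSet_image_coe hS)
    _ = volume (⋃ g : AddSubgroup.zmultiples T, (g +ᵥ S) ∩ I) := by
        simp only [QuotientAddGroup.preimage_image_mk_eq_iUnion_image, iUnion_inter]
        simp only [← image_vadd, AddSubgroup.vadd_def, vadd_eq_add, add_comm]
    _ ≤ ∑' g : AddSubgroup.zmultiples T, volume ((g +ᵥ S) ∩ I) := measure_iUnion_le _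
    _ = volume S := ((isAddFundamentalDomain_Ioc hT.out 0).measure_eq_tsum S).symm

theorem volume_image_coe_le (S : Set ℝ) :
    volume (((↑) : ℝ → AddCircle T) '' S) ≤ volume S :=
  calc volume (((↑) : ℝ → AddCircle T) '' S)
      ≤ volume (((↑) : ℝ → AddCircle T) '' toMeasurable volume S) :=
        measure_mono (image_mono (subset_toMeasurable _ _))
    _ ≤ volume (toMeasurable volume S) :=
        volume_image_coe_le_of_measurableSet (measurableSet_toMeasurable _ _)
    _ = volume S := measure_toMeasurable S

end AddCircle

/-- For every bounded measurable set `E ⊆ ℝ`,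
`λ(E + {0,1}) ≥ λ(E) + μ(π(E))`, where `π : ℝ → 𝕋 = ℝ/ℤ` is the projection. -/
theorem volume_add_zero_one (E : Set ℝ)
    (hEbd : Bornology.IsBounded E) (hEmeas : MeasurableSet E) :
    volume (E + ({0, 1} : Set ℝ))
      ≥ volume E + volume ((fun x : ℝ => (x : UnitAddCircle)) '' E) :=
  calc volume (E + ({0, 1} : Set ℝ))
      = volume (E ∪ (E + {1}) \ E) := by
        rw [union_sdiff_self, insert_eq, add_union, singleton_zero, add_zero]
    _ = volume E + volume ((E + {1}) \ E) := measure_union' disjoint_sdiff_right hEmeas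
    _ ≥ volume E + volume ((fun x : ℝ => (x : UnitAddCircle)) '' E) := by
        gcongr
        calc volume ((fun x : ℝ => (x : UnitAddCircle)) '' E)
            ≤ volume ((fun x : ℝ => (x : UnitAddCircle)) '' ((E + {1}) \ E)) :=
              measure_mono (AddCircle.image_coe_subset_image_add_period_diff one_pos
                hEbd.bddAbove)
          _ ≤ volume ((E + {1}) \ E) := AddCircle.volume_image_coe_le _
end

section
/- Let A ⊆ ℝ≥0 be a closed bounded set of nonzero Lebesgue measure and let K_A = sup{k ∈ ℕ : Ã_k ≠ ∅}. Then for every integer k with 1 ≤ k ≤ K_A, λ({x ∈ A : x mod 1 ∈ Ã_k}) = k·μ(Ã_k) + Σ_{l=k+1}^{K_A} μ(Ã_l). -/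
open MeasureTheory Set Pointwise
open scoped ENNReal

/-!
Count the shifts `c(x) = ∑ₙ 1_A(n + x)`. Cutting `A ⊆ [0, ∞)` along the unit intervals
`[n, n + 1)` and translating each piece back to `[0, 1)` gives `λ(A ∩ fract⁻¹ S) = ∫_S c` for
every `S ⊆ [0, 1)`. On `Ã_k` we have `k ≤ c ≤ K_A`, so there `c = k + ∑_{l=k+1}^{K_A} 1_{Ã_l}`;
integrating over `Ã_k` and using `Ã_l ⊆ Ã_k` for `l ≥ k` gives the formula.
-/

open Function

noncomputable def natShiftCount (A : Set ℝ) (x : ℝ) : ℝ≥0∞ :=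
  ∑' n : ℕ, A.indicator 1 ((n : ℝ) + x)

lemma natShiftCount_eq_encard (A : Set ℝ) (x : ℝ) :
    natShiftCount A x = ({n : ℕ | (n : ℝ) + x ∈ A}.encard : ℝ≥0∞) := by
  rw [← ENNReal.tsum_set_one, tsum_subtype _ fun _ => (1 : ℝ≥0∞)]
  rfl

lemma measurable_indicator_one_natCast_add {A : Set ℝ} (hA : MeasurableSet A) (n : ℕ) :
    Measurable fun x : ℝ => A.indicator (1 : ℝ → ℝ≥0∞) ((n : ℝ) + x) :=
  (measurable_one.indicator hA).comp (measurable_const_add _)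

lemma measurable_natShiftCount {A : Set ℝ} (hA : MeasurableSet A) :
    Measurable (natShiftCount A) :=
  Measurable.tsum (measurable_indicator_one_natCast_add hA)

lemma Int.fract_eq_sub_natCast_iff {R : Type*} [Ring R] [LinearOrder R] [IsOrderedRing R]
    [FloorRing R] {x : R} {n : ℕ} :
    Int.fract x = x - n ↔ x - n ∈ Ico 0 1 := by
  rw [Int.fract_eq_iff]
  exact ⟨fun h => ⟨h.1, h.2.1⟩, fun h => ⟨h.1, h.2, n, by simp⟩⟩

lemma inter_fract_preimage_eq_iUnion {A S : Set ℝ} (hA : A ⊆ Ici 0) (hS : S ⊆ Ico 0 1) :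
    A ∩ Int.fract ⁻¹' S = ⋃ n : ℕ, (· - (n : ℝ)) ⁻¹' ((n + ·) ⁻¹' A ∩ S) := by
  ext x
  simp only [mem_inter_iff, mem_preimage, mem_iUnion, add_sub_cancel]
  constructor
  · rintro ⟨hxA, hxS⟩
    have hfract : Int.fract x = x - ⌊x⌋₊ := by
      rw [Int.fract_eq_sub_natCast_iff, mem_Ico, sub_nonneg, sub_lt_iff_lt_add']
      exact ⟨Nat.floor_le (hA hxA), Nat.lt_floor_add_one x⟩
    exact ⟨⌊x⌋₊, hxA, hfract ▸ hxS⟩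
  · rintro ⟨n, hxA, hxS⟩
    exact ⟨hxA, (Int.fract_eq_sub_natCast_iff.2 (hS hxS)).symm ▸ hxS⟩

lemma pairwise_disjoint_preimage_sub_natCast {S : Set ℝ} (hS : S ⊆ Ico 0 1) (T : ℕ → Set ℝ) :
    Pairwise (Disjoint on (fun n : ℕ => (· - (n : ℝ)) ⁻¹' (T n ∩ S))) := by
  intro m n hmn
  refine disjoint_left.2 fun x hm hn => hmn ?_
  obtain ⟨hm0, hm1⟩ := hS hm.2
  obtain ⟨hn0, hn1⟩ := hS hn.2
  have hmn : (m : ℝ) < n + 1 := by linarith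
  have hnm : (n : ℝ) < m + 1 := by linarith
  norm_cast at hmn hnm
  omega

theorem volume_inter_fract_preimage {A S : Set ℝ} (hAm : MeasurableSet A) (hA : A ⊆ Ici 0)
    (hSm : MeasurableSet S) (hS : S ⊆ Ico 0 1) :
    volume (A ∩ Int.fract ⁻¹' S) = ∫⁻ x in S, natShiftCount A x := by
  have hpre (n : ℕ) : MeasurableSet (((n : ℝ) + ·) ⁻¹' A ∩ S) :=
    (hAm.preimage (measurable_const_add _)).inter hSm
  rw [inter_fract_preimage_eq_iUnion hA hS,
    measure_iUnion (pairwise_disjoint_preimage_sub_natCast hS _)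
      fun n => (hpre n).preimage (measurable_sub_const _)]
  unfold natShiftCount
  rw [lintegral_tsum fun n => (measurable_indicator_one_natCast_add hAm n).aemeasurable]
  refine tsum_congr fun n => ?_
  simp_rw [sub_eq_add_neg]
  rw [measure_preimage_add_right, ← Measure.restrict_apply (hAm.preimage (measurable_const_add _)),
    ← lintegral_indicator_one (hAm.preimage (measurable_const_add _))]
  rfl

lemma finite_setOf_natCast_add_mem_s12 {A : Set ℝ} (hA : Bornology.IsBounded A) (x : ℝ) :
    {n : ℕ | (n : ℝ) + x ∈ A}.Finite := by
  obtain ⟨C, hC⟩ := hA.bddAbove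
  refine (finite_Iic ⌊C - x⌋₊).subset fun n hn => ?_
  exact Nat.le_floor (le_sub_iff_add_le.2 (hC hn))

lemma natShiftCount_eq_ncard {A : Set ℝ} (hA : Bornology.IsBounded A) (x : ℝ) :
    natShiftCount A x = {n : ℕ | (n : ℝ) + x ∈ A}.ncard := by
  rw [natShiftCount_eq_encard, ← (finite_setOf_natCast_add_mem_s12 hA x).cast_ncard_eq]
  rfl

lemma tildeSet_antitone (E : Set ℝ) : Antitone (tildeSet E) :=
  fun _ _ hkl _ hx => ⟨hx.1, hkl.trans hx.2⟩

lemma measurableSet_tildeSet {A : Set ℝ} (hAm : MeasurableSet A) (hA : Bornology.IsBounded A)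
    (k : ℕ) : MeasurableSet (tildeSet A k) := by
  have hrepr : tildeSet A k = Ico 0 1 ∩ {x | (k : ℝ≥0∞) ≤ natShiftCount A x} := by
    ext x
    simp only [tildeSet, natShiftCount_eq_ncard hA, Nat.cast_le, mem_inter_iff, mem_ofPred_eq]
  rw [hrepr]
  exact measurableSet_Ico.inter (measurableSet_le measurable_const (measurable_natShiftCount hAm))

lemma bddAbove_setOf_tildeSet_ne_empty {A : Set ℝ} (hA : Bornology.IsBounded A) :
    BddAbove {k : ℕ | tildeSet A k ≠ ∅} := by
  obtain ⟨C, hC⟩ := hA.bddAbove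
  refine ⟨⌊C⌋₊ + 1, fun k hk => ?_⟩
  obtain ⟨x, hx, hkx⟩ := nonempty_iff_ne_empty.2 hk
  have hsub : {n : ℕ | (n : ℝ) + x ∈ A} ⊆ Iic ⌊C⌋₊ := fun n hn =>
    Nat.le_floor ((le_add_of_nonneg_right hx.1).trans (hC hn))
  calc k ≤ _ := hkx
    _ ≤ (Iic ⌊C⌋₊).ncard := ncard_le_ncard hsub (finite_Iic _)
    _ = ⌊C⌋₊ + 1 := by rw [← Finset.coe_Iic, ncard_coe_finset, Nat.card_Iic]

lemma ncard_le_KE {A : Set ℝ} (hA : Bornology.IsBounded A) {x : ℝ} (hx : x ∈ Ico 0 1) :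
    {n : ℕ | (n : ℝ) + x ∈ A}.ncard ≤ KE A :=
  le_csSup (bddAbove_setOf_tildeSet_ne_empty hA) (nonempty_iff_ne_empty.1 ⟨x, hx, le_rfl⟩)

lemma natShiftCount_eq_add_sum_indicator {A : Set ℝ} (hA : Bornology.IsBounded A) {k : ℕ}
    {x : ℝ} (hx : x ∈ tildeSet A k) :
    natShiftCount A x = k + ∑ l ∈ Finset.Icc (k + 1) (KE A), (tildeSet A l).indicator 1 x := by
  set c := {n : ℕ | (n : ℝ) + x ∈ A}.ncard with hc
  have hcK : c ≤ KE A := ncard_le_KE hA hx.1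
  have hind (l : ℕ) : (tildeSet A l).indicator (1 : ℝ → ℝ≥0∞) x = if l ≤ c then 1 else 0 := by
    simp only [indicator_apply, tildeSet, mem_ofPred_eq, hx.1, true_and, Pi.one_apply, hc]
  have hfilter : (Finset.Icc (k + 1) (KE A)).filter (· ≤ c) = Finset.Icc (k + 1) c := by
    ext l
    simp only [Finset.mem_filter, Finset.mem_Icc]
    omega
  rw [natShiftCount_eq_ncard hA, Finset.sum_congr rfl fun l _ => hind l, Finset.sum_boole,
    hfilter, Nat.card_Icc]
  norm_cast
  have hkc : k ≤ c := hx.2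
  omega

theorem measure_preimage_tilde_general (A : Set ℝ)
    (hAcl : IsClosed A) (hAbd : Bornology.IsBounded A)
    (hApos : A ⊆ {x : ℝ | 0 ≤ x})
    (k : ℕ) :
    volume {x ∈ A | Int.fract x ∈ tildeSet A k}
      = (k : ℝ≥0∞) * volume (tildeSet A k)
        + ∑ l ∈ Finset.Icc (k + 1) (KE A), volume (tildeSet A l) := by
  have hAm := hAcl.measurableSet
  have hmeas := measurableSet_tildeSet hAm hAbd
  calc volume {x ∈ A | Int.fract x ∈ tildeSet A k}
      = ∫⁻ x in tildeSet A k, natShiftCount A x :=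
        volume_inter_fract_preimage hAm hApos (hmeas k) fun _ hx => hx.1
    _ = ∫⁻ x in tildeSet A k,
          (k + ∑ l ∈ Finset.Icc (k + 1) (KE A), (tildeSet A l).indicator 1 x) :=
        setLIntegral_congr_fun (hmeas k) fun _ hx => natShiftCount_eq_add_sum_indicator hAbd hx
    _ = _ := by
      rw [lintegral_add_left measurable_const, setLIntegral_const,
        lintegral_finsetSum _ fun l _ => measurable_one.indicator (hmeas l)]
      refine congrArg _ (Finset.sum_congr rfl fun l hl => ?_)
      rw [lintegral_indicator_one (hmeas l), Measure.restrict_apply (hmeas l),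
        inter_eq_left.2 (tildeSet_antitone A (Nat.le_of_succ_le (Finset.mem_Icc.1 hl).1))]

/-- For `1 ≤ k ≤ K_A`,
`λ({x ∈ A : x mod 1 ∈ Ã_k}) = k·μ(Ã_k) + Σ_{l=k+1}^{K_A} μ(Ã_l)`. -/
theorem measure_preimage_tilde (A : Set ℝ)
    (hAcl : IsClosed A) (hAbd : Bornology.IsBounded A)
    (hA0 : volume A ≠ 0) (hApos : A ⊆ {x : ℝ | 0 ≤ x})
    (k : ℕ) (hk1 : 1 ≤ k) (hk2 : k ≤ KE A) :
    volume {x ∈ A | Int.fract x ∈ tildeSet A k}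
      = (k : ℝ≥0∞) * volume (tildeSet A k)
        + ∑ l ∈ Finset.Icc (k + 1) (KE A), volume (tildeSet A l) :=
  measure_preimage_tilde_general A hAcl hAbd hApos k
end
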